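/- arXiv:1909.06941 — 2 statements merged into one kernel-verified Lean document; each statement's English description precedes it below -/
import Mathlib

section
/- Let A_{m,i}^k be defined by A_{0,0}^k = δ_{k,0}, A_{m,-1}^k = 0, A_{m,i}^{-1} = A_{m,i}^{-2} = 0, and A_{m,i}^k = (k-1)(A_{m-1,i}^{k-1} + A_{m-1,i}^{k-2} + A_{m-1,i-1}^{k-2}) + (k+i-m-1)·A_{m-1,i-1}^{k-1} for m ≥ 1. Then for all integers n ≥ m ≥ i ≥ 0: [n brack n-m+i] · [n-m+i brack n-m] = Σ_{k=0}^{2m} A_{m,i}^k · C(n,k), where [· brack ·] denotes unsigned Stirling numbers of the first kind and C(n,k) the binomial coefficient. -/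
open Finset

/-- Unsigned Stirling numbers of the first kind. -/
def stir : ℕ → ℕ → ℕ
  | 0, 0 => 1
  | 0, _ + 1 => 0
  | _ + 1, 0 => 0
  | n + 1, i + 1 => stir n i + n * stir n (i + 1)

/-- The three-parameter family of integers `A_{m,i}^k`. -/
def A : ℕ → ℤ → ℤ → ℤ
  | 0, i, k => if i = 0 ∧ k = 0 then 1 else 0
  | m + 1, i, k =>
      if i < 0 ∨ k < 0 then 0
      else (k - 1) * (A m i (k - 1) + A m i (k - 2) + A m (i - 1) (k - 2))
            + (k + i - (m + 1) - 1) * A m (i - 1) (k - 1)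

/-!
Write `F(m, i, n)` for either side. Both sides satisfy, for every `i`, the recurrence
`F(m+1, i, n+1) = F(m+1, i, n) + (n + i - m - 1) F(m, i-1, n) + n F(m, i, n)`:
the Stirling side by applying the Stirling recurrence to both factors, the binomial side by
Pascal's rule together with `n C(n,k) = k C(n,k) + (k+1) C(n,k+1)`, which is exactly what the
recurrence defining `A` encodes. So it suffices to compare them at `n = m` and use induction on
`m` and then on `n ≥ m`. At `n = m ≥ 1` the Stirling product is `[m brack i] [i brack 0] = 0`;
the binomial sum vanishes for all `n ≤ m` because it is `A_{m,i}^0 = 0` at `n = 0` and the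
recurrence propagates this (the lower level is `0` there as well, or `(i-1) δ_{i,1}` when `m = 1`).
-/

lemma stir_succ_succ (n k : ℕ) : stir (n + 1) (k + 1) = stir n k + n * stir n (k + 1) := rfl

lemma stir_succ_zero (n : ℕ) : stir (n + 1) 0 = 0 := rfl

lemma stir_eq_zero_of_lt {n k : ℕ} (h : n < k) : stir n k = 0 := by
  induction n generalizing k with
  | zero => obtain ⟨k, rfl⟩ := Nat.exists_eq_add_of_lt h; rfl
  | succ n ih =>
    obtain ⟨k, rfl⟩ := Nat.exists_eq_add_of_le' (Nat.one_le_of_lt h)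
    rw [stir_succ_succ, ih (by omega), ih (by omega), mul_zero, add_zero]

lemma stir_self (n : ℕ) : stir n n = 1 := by
  induction n with
  | zero => rfl
  | succ n ih => rw [stir_succ_succ, ih, stir_eq_zero_of_lt n.lt_succ_self, mul_zero, add_zero]

lemma stir_mul_stir_succ (n b i : ℕ) :
    stir (n + 1) (b + 1 + i) * stir (b + 1 + i) (b + 1)
      = stir n (b + i) * stir (b + i) b + (b + i) * (stir n (b + i) * stir (b + i) (b + 1))
        + n * (stir n (b + 1 + i) * stir (b + 1 + i) (b + 1)) := by
  rw [show b + 1 + i = b + i + 1 by omega, stir_succ_succ, stir_succ_succ]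
  ring

lemma A_of_neg_left (m : ℕ) {i : ℤ} (k : ℤ) (hi : i < 0) : A m i k = 0 := by
  cases m with
  | zero => simp [A]; omega
  | succ m => simp [A, hi]

lemma A_of_neg_right (m : ℕ) (i : ℤ) {k : ℤ} (hk : k < 0) : A m i k = 0 := by
  cases m with
  | zero => simp [A]; omega
  | succ m => simp [A, hk]

lemma A_succ_zero (m : ℕ) (i : ℤ) : A (m + 1) i 0 = 0 := by
  simp [A, A_of_neg_right]

lemma A_succ_natCast_add_one (m : ℕ) (i : ℤ) (k : ℕ) :
    A (m + 1) i (k + 1) = k * (A m i k + A m i (k - 1) + A m (i - 1) (k - 1))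
      + (k + i - m - 1) * A m (i - 1) k := by
  rcases lt_or_ge i 0 with hi | hi
  · simp [A, hi, A_of_neg_left m _ hi, A_of_neg_left m _ (show i - 1 < 0 by omega)]
  · rw [A, if_neg (by omega)]
    ring_nf

lemma A_of_two_mul_lt (m : ℕ) (i : ℤ) {k : ℤ} (hk : 2 * (m : ℤ) < k) : A m i k = 0 := by
  induction m generalizing i k with
  | zero => simp [A]; omega
  | succ m ih =>
    rw [A]
    split_ifs
    · rfl
    · rw [ih _ (by omega), ih _ (by omega), ih _ (by omega), ih _ (by omega)]
      ring

lemma mul_choose_eq (n k : ℕ) :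
    n * n.choose k = k * n.choose k + (k + 1) * n.choose (k + 1) := by
  rcases le_or_gt k n with hk | hk
  · rw [mul_comm (k + 1), Nat.choose_succ_right_eq, mul_comm _ (n - k), ← add_mul,
      Nat.add_sub_cancel' hk]
  · simp [Nat.choose_eq_zero_of_lt hk, Nat.choose_eq_zero_of_lt (Nat.lt_succ_of_lt hk)]

def newtonSum (a : ℤ → ℤ) (N n : ℕ) : ℤ := ∑ k ∈ range N, a k * n.choose k

lemma newtonSum_succ_zero (a : ℤ → ℤ) (N : ℕ) : newtonSum a (N + 1) 0 = a 0 := by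
  simp [newtonSum, sum_range_succ']

lemma newtonSum_succ_of_eq_zero {a : ℤ → ℤ} {N : ℕ} (n : ℕ) (ha : a N = 0) :
    newtonSum a (N + 1) n = newtonSum a N n := by
  simp [newtonSum, sum_range_succ, ha]

lemma newtonSum_succ_succ (a : ℤ → ℤ) (N n : ℕ) :
    newtonSum a (N + 1) (n + 1) = newtonSum a (N + 1) n + newtonSum (fun k ↦ a (k + 1)) N n := by
  simp only [newtonSum, sum_range_succ' _ N, Nat.choose_succ_succ', Nat.choose_zero_right]
  push_cast
  simp only [mul_add, sum_add_distrib]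
  ring

lemma natCast_mul_newtonSum {a : ℤ → ℤ} {N : ℕ} (n : ℕ) (ha : a N = 0) :
    n * newtonSum a N n = newtonSum (fun k ↦ k * (a k + a (k - 1))) (N + 1) n := by
  have hshift : ∑ k ∈ range (N + 1), (k : ℤ) * a (k - 1) * n.choose k
      = ∑ k ∈ range N, ((k : ℤ) + 1) * a k * n.choose (k + 1) := by
    simp [sum_range_succ']
  have hmul : ∀ k : ℕ, (n : ℤ) * (a k * n.choose k)
      = k * a k * n.choose k + ((k : ℤ) + 1) * a k * n.choose (k + 1) := fun k ↦ by
    have := congrArg (Nat.cast : ℕ → ℤ) (mul_choose_eq n k)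
    push_cast at this
    linear_combination a k * this
  simp only [newtonSum, mul_sum, hmul, mul_add, add_mul, sum_add_distrib, hshift]
  simp [sum_range_succ, ha, mul_assoc]

def sumA (m : ℕ) (i : ℤ) (n : ℕ) : ℤ := newtonSum (A m i) (2 * m + 1) n

lemma sumA_of_neg_left (m : ℕ) {i : ℤ} (n : ℕ) (hi : i < 0) : sumA m i n = 0 := by
  simp [sumA, newtonSum, A_of_neg_left m _ hi]

lemma sumA_succ_succ (m : ℕ) (i : ℤ) (n : ℕ) :
    sumA (m + 1) i (n + 1)
      = sumA (m + 1) i n + (n + i - m - 1) * sumA m (i - 1) n + n * sumA m i n := by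
  have hA : ∀ j, A m j (2 * m + 1 : ℕ) = 0 := fun j ↦ A_of_two_mul_lt m j (by omega)
  have hdiff : newtonSum (fun k ↦ A (m + 1) i (k + 1)) (2 * m + 1 + 1) n
      = newtonSum (fun k ↦ k * (A m i k + A m i (k - 1))) (2 * m + 1 + 1) n
        + newtonSum (fun k ↦ k * (A m (i - 1) k + A m (i - 1) (k - 1))) (2 * m + 1 + 1) n
        + (i - m - 1) * newtonSum (A m (i - 1)) (2 * m + 1 + 1) n := by
    simp only [newtonSum, mul_sum, ← sum_add_distrib, A_succ_natCast_add_one]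
    exact sum_congr rfl fun k _ ↦ by ring
  rw [sumA, sumA, show 2 * (m + 1) + 1 = 2 * m + 1 + 1 + 1 by ring, newtonSum_succ_succ, hdiff,
    newtonSum_succ_of_eq_zero n (hA _), ← natCast_mul_newtonSum n (hA _),
    ← natCast_mul_newtonSum n (hA _), sumA, sumA]
  ring

lemma sumA_zero_left (j : ℤ) (n : ℕ) : sumA 0 j n = if j = 0 then 1 else 0 := by
  simp [sumA, newtonSum, A]

lemma sumA_succ_zero_right (m : ℕ) (i : ℤ) : sumA (m + 1) i 0 = 0 := by
  rw [sumA, newtonSum_succ_zero, A_succ_zero]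

lemma sumA_succ_eq_zero_of_le {m n : ℕ} (i : ℤ) (hn : n ≤ m + 1) : sumA (m + 1) i n = 0 := by
  induction m generalizing i n with
  | zero =>
    obtain rfl | rfl : n = 0 ∨ n = 1 := by omega
    · exact sumA_succ_zero_right 0 i
    · rw [sumA_succ_succ, sumA_succ_zero_right, sumA_zero_left]
      split_ifs <;> simp_all
  | succ m ih =>
    induction n generalizing i with
    | zero => exact sumA_succ_zero_right _ i
    | succ n ihn =>
      rw [sumA_succ_succ, ihn _ (by omega), ih _ (by omega), ih _ (by omega)]
      ring

lemma natCast_stir_mul_stir_eq_sumA (m i b : ℕ) :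
    ((stir (m + b) (b + i) * stir (b + i) b : ℕ) : ℤ) = sumA m i (m + b) := by
  induction m generalizing i b with
  | zero =>
    rw [sumA_zero_left]
    rcases Nat.eq_zero_or_pos i with rfl | hi
    · simp [stir_self]
    · simp [stir_eq_zero_of_lt (show b < b + i by omega), hi.ne']
  | succ m ih =>
    induction b with
    | zero =>
      rw [sumA_succ_eq_zero_of_le _ le_rfl]
      cases i <;> simp [stir_succ_zero]
    | succ b ihb =>
      have hmid : ((b + i) * (stir (m + 1 + b) (b + i) * stir (b + i) (b + 1)) : ℕ)
          = ((m + 1 + b : ℕ) + (i : ℤ) - m - 1) * sumA m (i - 1) (m + 1 + b) := by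
        cases i with
        | zero =>
          rw [stir_eq_zero_of_lt (show b + 0 < b + 1 by omega), sumA_of_neg_left _ _ (by omega)]
          simp
        | succ j =>
          rw [show b + (j + 1) = b + 1 + j by ring, show m + 1 + b = m + (b + 1) by ring,
            Nat.cast_succ, add_sub_cancel_right, ← ih j (b + 1)]
          push_cast
          ring
      rw [show m + 1 + (b + 1) = m + 1 + b + 1 by ring, stir_mul_stir_succ, sumA_succ_succ, ← ihb,
        Nat.cast_add, Nat.cast_add, hmid, Nat.cast_mul (m + 1 + b),
        show m + 1 + b = m + (b + 1) by ring, ih i (b + 1)]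

theorem stmt_6_general (n m i : ℕ) (hm : m ≤ n) :
    (stir n (n - m + i) * stir (n - m + i) (n - m) : ℤ)
      = ∑ k ∈ Finset.range (2 * m + 1), A m i k * (n.choose k : ℤ) := by
  obtain ⟨b, rfl⟩ := Nat.exists_eq_add_of_le hm
  rw [Nat.add_sub_cancel_left]
  exact_mod_cast natCast_stir_mul_stir_eq_sumA m i b

theorem stmt_6 (n m i : ℕ) (hi : i ≤ m) (hm : m ≤ n) :
    (stir n (n - m + i) * stir (n - m + i) (n - m) : ℤ)
      = ∑ k ∈ Finset.range (2 * m + 1), A m i k * (n.choose k : ℤ) :=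
  stmt_6_general n m i hm
end

section
/- With 𝒜_{m,i}^k(t) the polynomials defined via the operators B₁,C₁,B₂,C₂ (as in the paper), they satisfy the recurrence 𝒜_{m,i}^k(t) = (k-1)(𝒜_{m-1,i}^{k-1}(t) - t²𝒜_{m-1,i-1}^{k-2}(t) + t𝒜_{m-1,i}^{k-2}(t)) - (k-m+i-1)·t·𝒜_{m-1,i-1}^{k-1}(t), and consequently (-1)^i A_{m,i}^k = 𝒜_{m,i}^k(1), where A_{m,i}^k satisfies A_{m,i}^k = (k-1)(A_{m-1,i}^{k-1} + A_{m-1,i}^{k-2} + A_{m-1,i-1}^{k-2}) + (k+i-m-1)A_{m-1,i-1}^{k-1} with A_{0,0}^k = δ_{k,0}. -/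
open Finset

/-- The four operators `B₁, C₁, B₂, C₂`, encoded as `0, 1, 2, 3`. -/
abbrev Op := Fin 4

/-- How much an operator increments the index `k`: by `1` for `B₁, C₁`
and by `2` for `B₂, C₂`. -/
def stepIdx (o : Op) : ℤ := if o.val ≤ 1 then 1 else 2

/-- The action of an operator on a polynomial at current index `j`:
`B₁ : t_j^n ↦ j t_{j+1}^n`, `C₁ : t_j^n ↦ -n t_{j+1}^{n+1}`,
`B₂ : t_j^n ↦ (j+1) t_{j+2}^{n+1}`, `C₂ : t_j^n ↦ -(j+1) t_{j+2}^{n+2}`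
(so that, writing the output index as `k`, `B₁(t_{k-1}^n) = (k-1) t_k^n`,
`C₁(t_{k-1}^n) = -n t_k^{n+1}`, `B₂(t_{k-2}^n) = (k-1) t_k^{n+1}` and
`C₂(t_{k-2}^n) = -(k-1) t_k^{n+2}`). -/
noncomputable def applyOp (o : Op) (j : ℤ) (p : Polynomial ℤ) : Polynomial ℤ :=
  if o.val = 0 then Polynomial.C j * p
  else if o.val = 1 then -(Polynomial.X ^ 2 * Polynomial.derivative p)
  else if o.val = 2 then Polynomial.C (j + 1) * (Polynomial.X * p)
  else -(Polynomial.C (j + 1) * (Polynomial.X ^ 2 * p))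

/-- Apply a word of operators (first entry applied first), starting at index `j`. -/
noncomputable def evalWord : List Op → ℤ → Polynomial ℤ → Polynomial ℤ
  | [], _, p => p
  | o :: w, j, p => evalWord w (j + stepIdx o) (applyOp o j p)

/-- The polynomial `𝒜_{m,i}^k(t)`: the sum of `Y_m ⋯ Y_1 (t_0^0)` over all words
of `m` operators with `Y_1 ∈ {B₂, C₂}`, exactly `i` of the `Y_h` in `{C₁, C₂}`,
and exactly `k - m` of the `Y_h` in `{B₂, C₂}`; `𝒜_{0,0}^0 = 1` and `𝒜_{m,i}^k = 0`
otherwise. -/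
noncomputable def calA (m : ℕ) (i k : ℤ) : Polynomial ℤ :=
  if m = 0 then (if i = 0 ∧ k = 0 then 1 else 0)
  else
    ∑ w ∈ Finset.univ.filter (fun w : Fin m → Op =>
        (∀ a : Fin m, a.val = 0 → 2 ≤ (w a).val) ∧
        ((Finset.univ.filter (fun a : Fin m => (w a).val = 1 ∨ (w a).val = 3)).card : ℤ) = i ∧
        ((Finset.univ.filter (fun a : Fin m => 2 ≤ (w a).val)).card : ℤ) = k - m),
      evalWord (List.ofFn w) 0 1

/-!
Dropping the condition `Y₁ ∈ {B₂, C₂}` changes nothing, since `B₁` and `C₁` annihilate `t₀⁰`.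
Splitting the remaining sum by its last letter `Y_m`, which acts at index `k - 1` or `k - 2`,
gives the four terms of the recurrence. For `C₁` one uses that every word produces a monomial of
degree `i + k - m`, so `t² d/dt` acts on the sum as multiplication by `(k - m + i - 1) t`.
Evaluating at `t = 1` turns this into the recurrence of `A` twisted by `(-1)^i`; both families
vanish for `i < 0` or `k < 0`, so the two recurrences hold for all integer indices.
-/

open Polynomial

namespace Op

def isC (o : Op) : ℕ := if o.val = 1 ∨ o.val = 3 then 1 else 0

def isTwo (o : Op) : ℕ := if 2 ≤ o.val then 1 else 0

end Op

lemma stepIdx_eq_one_add_isTwo (o : Op) : stepIdx o = 1 + o.isTwo := by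
  fin_cases o <;> rfl

lemma applyOp_sum {ι : Type*} (o : Op) (j : ℤ) (s : Finset ι) (f : ι → ℤ[X]) :
    applyOp o j (∑ a ∈ s, f a) = ∑ a ∈ s, applyOp o j (f a) := by
  fin_cases o <;> simp [applyOp, Finset.mul_sum]

lemma applyOp_zero (o : Op) (j : ℤ) : applyOp o j 0 = 0 := by
  fin_cases o <;> simp [applyOp]

lemma applyOp_zero_one {o : Op} (ho : o.val ≤ 1) : applyOp o 0 1 = 0 := by
  fin_cases o <;> simp_all [applyOp]

lemma applyOp_C_mul_X_pow (o : Op) (j c : ℤ) (n : ℕ) :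
    ∃ c', applyOp o j (C c * X ^ n) = C c' * X ^ (n + (o.isC + o.isTwo)) := by
  fin_cases o
  · exact ⟨j * c, by simp [applyOp, Op.isC, Op.isTwo]; ring⟩
  · refine ⟨-(c * n), ?_⟩
    rcases n with _ | n
    · simp [applyOp]
    · simp [applyOp, Op.isC, Op.isTwo]; ring
  · exact ⟨(j + 1) * c, by simp [applyOp, Op.isC, Op.isTwo]; ring⟩
  · exact ⟨-((j + 1) * c), by simp [applyOp, Op.isC, Op.isTwo]; ring⟩

lemma evalWord_zero (l : List Op) (j : ℤ) : evalWord l j 0 = 0 := by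
  induction l generalizing j with
  | nil => rfl
  | cons o l ih => rw [evalWord, applyOp_zero, ih]

lemma evalWord_append_singleton (l : List Op) (o : Op) (j : ℤ) (p : ℤ[X]) :
    evalWord (l ++ [o]) j p = applyOp o (j + (l.map stepIdx).sum) (evalWord l j p) := by
  induction l generalizing j p with
  | nil => simp [evalWord]
  | cons o' l ih => simp [evalWord, ih, add_assoc]

lemma evalWord_C_mul_X_pow (l : List Op) (j c : ℤ) (n : ℕ) :
    ∃ c', evalWord l j (C c * X ^ n)
      = C c' * X ^ (n + (l.map Op.isC).sum + (l.map Op.isTwo).sum) := by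
  induction l generalizing j c n with
  | nil => exact ⟨c, by simp [evalWord]⟩
  | cons o l ih =>
    obtain ⟨c₁, h₁⟩ := applyOp_C_mul_X_pow o j c n
    obtain ⟨c₂, h₂⟩ := ih (j + stepIdx o) c₁ (n + (o.isC + o.isTwo))
    exact ⟨c₂, by rw [evalWord, h₁, h₂]; simp only [List.map_cons, List.sum_cons]; ring⟩

lemma X_mul_derivative_C_mul_X_pow (c : ℤ) (n : ℕ) :
    X * derivative (C c * X ^ n) = C (n : ℤ) * (C c * X ^ n) := by
  rcases n with _ | n
  · simp
  · rw [derivative_C_mul_X_pow, map_mul, Nat.add_sub_cancel, pow_succ]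
    push_cast
    ring

lemma card_filter_snoc {α : Type*} {n : ℕ} (v : Fin n → α) (o : α) (q : α → Prop)
    [DecidablePred q] :
    #{a : Fin (n + 1) | q ((Fin.snoc v o : Fin (n + 1) → α) a)}
      = #{a : Fin n | q (v a)} + if q o then 1 else 0 := by
  simp only [Finset.card_filter, Fin.sum_univ_castSucc, Fin.snoc_castSucc, Fin.snoc_last]

def HasCounts (m : ℕ) (i k : ℤ) (w : Fin m → Op) : Prop :=
  (#{a | (w a).val = 1 ∨ (w a).val = 3} : ℤ) = i ∧ (#{a | 2 ≤ (w a).val} : ℤ) = k - m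

instance (m : ℕ) (i k : ℤ) : DecidablePred (HasCounts m i k) := fun _ => by
  unfold HasCounts; infer_instance

lemma hasCounts_snoc_iff {n : ℕ} (i k : ℤ) (v : Fin n → Op) (o : Op) :
    HasCounts (n + 1) i k (Fin.snoc v o) ↔ HasCounts n (i - o.isC) (k - stepIdx o) v := by
  unfold HasCounts
  rw [card_filter_snoc v o (fun x : Op => x.val = 1 ∨ x.val = 3),
    card_filter_snoc v o (fun x : Op => 2 ≤ x.val)]
  fin_cases o <;> simp [Op.isC, stepIdx] <;> omega

lemma sum_map_isC_ofFn {m : ℕ} (w : Fin m → Op) :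
    ((List.ofFn w).map Op.isC).sum = #{a | (w a).val = 1 ∨ (w a).val = 3} := by
  rw [List.map_ofFn, List.sum_ofFn, Finset.card_filter]
  rfl

lemma sum_map_isTwo_ofFn {m : ℕ} (w : Fin m → Op) :
    ((List.ofFn w).map Op.isTwo).sum = #{a | 2 ≤ (w a).val} := by
  rw [List.map_ofFn, List.sum_ofFn, Finset.card_filter]
  rfl

lemma sum_map_stepIdx_ofFn {m : ℕ} {i k : ℤ} {w : Fin m → Op} (h : HasCounts m i k w) :
    ((List.ofFn w).map stepIdx).sum = k := by
  have h₂ : (((List.ofFn w).map Op.isTwo).sum : ℤ) = k - m := by rw [sum_map_isTwo_ofFn, h.2]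
  rw [List.map_ofFn, List.sum_ofFn] at h₂ ⊢
  simp only [Function.comp_def, stepIdx_eq_one_add_isTwo, Finset.sum_add_distrib] at h₂ ⊢
  push_cast at h₂
  simp [h₂]

noncomputable def wordSum (m : ℕ) (i k : ℤ) : ℤ[X] :=
  ∑ w with HasCounts m i k w, evalWord (List.ofFn w) 0 1

lemma evalWord_ofFn_eq_zero_of_head_le_one {n : ℕ} {w : Fin (n + 1) → Op}
    (hw : (w 0).val ≤ 1) : evalWord (List.ofFn w) 0 1 = 0 := by
  rw [List.ofFn_succ, evalWord, applyOp_zero_one hw, evalWord_zero]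

lemma calA_eq_wordSum (m : ℕ) (i k : ℤ) : calA m i k = wordSum m i k := by
  rcases m with _ | n
  · rw [calA, if_pos rfl, wordSum, Finset.sum_filter, Fintype.sum_unique]
    simp [HasCounts, evalWord, eq_comm]
  · rw [calA, if_neg n.succ_ne_zero, wordSum, Finset.sum_filter, Finset.sum_filter]
    refine Finset.sum_congr rfl fun w _ => ?_
    by_cases hw : (w 0).val ≤ 1
    · rw [evalWord_ofFn_eq_zero_of_head_le_one hw, ite_self, ite_self]
    · have hfirst : ∀ a : Fin (n + 1), a.val = 0 → 2 ≤ (w a).val := fun a ha => by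
        rw [Fin.ext (a := a) (b := 0) ha]; omega
      exact if_congr (and_iff_right hfirst) rfl rfl

lemma X_mul_derivative_wordSum (m : ℕ) (i k : ℤ) :
    X * derivative (wordSum m i k) = C (i + k - m) * wordSum m i k := by
  simp only [wordSum, map_sum, Finset.mul_sum]
  refine Finset.sum_congr rfl fun w hw => ?_
  obtain ⟨hi, hk⟩ := (Finset.mem_filter.mp hw).2
  obtain ⟨c, hc⟩ := evalWord_C_mul_X_pow (List.ofFn w) 0 1 0
  rw [C_1, pow_zero, mul_one, zero_add, sum_map_isC_ofFn, sum_map_isTwo_ofFn] at hc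
  rw [hc, X_mul_derivative_C_mul_X_pow]
  push_cast
  rw [hi, hk, add_sub_assoc]

lemma ofFn_snoc {α : Type*} {n : ℕ} (v : Fin n → α) (o : α) :
    List.ofFn (Fin.snoc v o : Fin (n + 1) → α) = List.ofFn v ++ [o] := by
  rw [List.ofFn_succ']
  simp

lemma sum_snoc_eq_applyOp_wordSum (n : ℕ) (i k : ℤ) (o : Op) :
    ∑ v : Fin n → Op, (if HasCounts (n + 1) i k (Fin.snoc v o)
        then evalWord (List.ofFn (Fin.snoc v o : Fin (n + 1) → Op)) 0 1 else 0)
      = applyOp o (k - stepIdx o) (wordSum n (i - o.isC) (k - stepIdx o)) := by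
  rw [wordSum, applyOp_sum, Finset.sum_filter]
  refine Finset.sum_congr rfl fun v _ => ?_
  by_cases h : HasCounts n (i - o.isC) (k - stepIdx o) v
  · rw [if_pos ((hasCounts_snoc_iff i k v o).mpr h), if_pos h, ofFn_snoc,
      evalWord_append_singleton, sum_map_stepIdx_ofFn h, zero_add]
  · rw [if_neg (mt (hasCounts_snoc_iff i k v o).mp h), if_neg h]

lemma wordSum_succ_eq_sum_applyOp (n : ℕ) (i k : ℤ) :
    wordSum (n + 1) i k
      = ∑ o : Op, applyOp o (k - stepIdx o) (wordSum n (i - o.isC) (k - stepIdx o)) := by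
  rw [wordSum, Finset.sum_filter, ← (Fin.snocEquiv fun _ => Op).sum_comp,
    Fintype.sum_prod_type]
  exact Finset.sum_congr rfl fun o _ => sum_snoc_eq_applyOp_wordSum n i k o

lemma wordSum_succ (n : ℕ) (i k : ℤ) :
    wordSum (n + 1) i k
      = C (k - 1) * (wordSum n i (k - 1) - X ^ 2 * wordSum n (i - 1) (k - 2)
          + X * wordSum n i (k - 2))
        - C (k - (n + 1 : ℕ) + i - 1) * (X * wordSum n (i - 1) (k - 1)) := by
  have hB₁ : applyOp 0 (k - stepIdx 0) (wordSum n (i - Op.isC 0) (k - stepIdx 0))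
      = C (k - 1) * wordSum n (i - 0) (k - 1) := rfl
  have hC₁ : applyOp 1 (k - stepIdx 1) (wordSum n (i - Op.isC 1) (k - stepIdx 1))
      = -(X ^ 2 * derivative (wordSum n (i - 1) (k - 1))) := rfl
  have hB₂ : applyOp 2 (k - stepIdx 2) (wordSum n (i - Op.isC 2) (k - stepIdx 2))
      = C (k - 2 + 1) * (X * wordSum n (i - 0) (k - 2)) := rfl
  have hC₂ : applyOp 3 (k - stepIdx 3) (wordSum n (i - Op.isC 3) (k - stepIdx 3))
      = -(C (k - 2 + 1) * (X ^ 2 * wordSum n (i - 1) (k - 2))) := rfl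
  rw [wordSum_succ_eq_sum_applyOp, Fin.sum_univ_four, hB₁, hC₁, hB₂, hC₂, sub_zero,
    show k - 2 + 1 = k - 1 by ring, pow_two, mul_assoc, X_mul_derivative_wordSum,
    show i - 1 + (k - 1) - n = k - (n + 1 : ℕ) + i - 1 by push_cast; ring]
  ring

lemma calA_succ (n : ℕ) (i k : ℤ) :
    calA (n + 1) i k
      = C (k - 1) * (calA n i (k - 1) - X ^ 2 * calA n (i - 1) (k - 2)
          + X * calA n i (k - 2))
        - C (k - (n + 1 : ℕ) + i - 1) * (X * calA n (i - 1) (k - 1)) := by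
  simpa only [calA_eq_wordSum] using wordSum_succ n i k

lemma A_eq_zero_of_neg {m : ℕ} {i k : ℤ} (h : i < 0 ∨ k < 0) : A m i k = 0 := by
  rcases m with _ | m
  · rw [A, if_neg]; omega
  · rw [A, if_pos h]

lemma A_succ (m : ℕ) (i k : ℤ) :
    A (m + 1) i k = (k - 1) * (A m i (k - 1) + A m i (k - 2) + A m (i - 1) (k - 2))
      + (k + i - (m + 1) - 1) * A m (i - 1) (k - 1) := by
  rw [A]
  split_ifs with h
  · simp only [A_eq_zero_of_neg (by omega : i < 0 ∨ k - 1 < 0),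
      A_eq_zero_of_neg (by omega : i < 0 ∨ k - 2 < 0),
      A_eq_zero_of_neg (by omega : i - 1 < 0 ∨ k - 2 < 0),
      A_eq_zero_of_neg (by omega : i - 1 < 0 ∨ k - 1 < 0)]
    ring
  · rfl

lemma eval_one_calA (m : ℕ) (i k : ℤ) : (calA m i k).eval 1 = i.negOnePow * A m i k := by
  induction m generalizing i k with
  | zero =>
    rw [calA, if_pos rfl, A]
    split_ifs with h
    · simp [h.1]
    · simp
  | succ m ih =>
    have hsign : ((i - 1).negOnePow : ℤ) = -i.negOnePow := by
      rw [Int.negOnePow_sub, Int.negOnePow_one, mul_neg_one, Units.val_neg]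
    rw [calA_succ, A_succ]
    simp only [eval_sub, eval_add, eval_mul, eval_C, eval_X, eval_pow,
      one_pow, one_mul, ih, hsign]
    push_cast
    ring

theorem stmt_16 :
    (∀ (m : ℕ), 1 ≤ m → ∀ i k : ℤ,
      calA m i k
        = Polynomial.C (k - 1) *
              (calA (m - 1) i (k - 1)
                - Polynomial.X ^ 2 * calA (m - 1) (i - 1) (k - 2)
                + Polynomial.X * calA (m - 1) i (k - 2))
            - Polynomial.C (k - m + i - 1) * (Polynomial.X * calA (m - 1) (i - 1) (k - 1)))
    ∧ ∀ (m i k : ℕ), ((-1 : ℤ) ^ i) * A m i k = (calA m i k).eval 1 := by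
  refine ⟨fun m hm i k => ?_, fun m i k => ?_⟩
  · obtain ⟨n, rfl⟩ := Nat.exists_eq_add_of_le' hm
    simpa only [Nat.add_sub_cancel] using calA_succ n i k
  · rw [eval_one_calA, Int.coe_negOnePow_natCast]
end
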